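/- In a 2-dimensional real inner product space, if A is self-adjoint with trace 2H and J is a linear isometry with J² = -id, then A - H·id anticommutes with J, i.e., (A - H·id) ∘ J = -J ∘ (A - H·id). -/

import Mathlib

open RealInnerProductSpace

/-- On a 2-dimensional real inner product space, the trace-free part of a
self-adjoint operator anticommutes with a rotation `J` (`J² = -id`, isometric). -/
theorem stmt_13 (V : Type*) [NormedAddCommGroup V] [InnerProductSpace ℝ V]
    [FiniteDimensional ℝ V] (hdim : Module.finrank ℝ V = 2)
    (A J : V →ₗ[ℝ] V) (hA : LinearMap.IsSymmetric A) (H : ℝ)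
    (htr : LinearMap.trace ℝ V A = 2 * H)
    (hJorth : ∀ x y : V, ⟪J x, J y⟫ = ⟪x, y⟫)
    (hJ2 : J ∘ₗ J = -LinearMap.id) :
    (A - H • LinearMap.id) ∘ₗ J = -(J ∘ₗ (A - H • LinearMap.id)) := by
  have hJ2' : ∀ x : V, J (J x) = -x := by
    intro x
    simpa using LinearMap.ext_iff.mp hJ2 x
  -- pick a unit vector
  have : Nontrivial V := by
    have h2 : 0 < Module.finrank ℝ V := by omega
    exact Module.nontrivial_of_finrank_pos h2
  obtain ⟨x, hx⟩ := exists_ne (0 : V)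
  set e : V := ‖x‖⁻¹ • x with he
  have hnorm : ‖e‖ = 1 := by
    rw [he, norm_smul, norm_inv, norm_norm, inv_mul_cancel₀ (norm_ne_zero_iff.mpr hx)]
  clear he
  clear_value e
  have hee : ⟪e, e⟫ = 1 := by
    rw [real_inner_self_eq_norm_sq, hnorm]; norm_num
  have heJe : ⟪e, J e⟫ = 0 := by
    have h1 : ⟪J e, J (J e)⟫ = ⟪e, J e⟫ := hJorth e (J e)
    rw [hJ2' e, inner_neg_right, real_inner_comm] at h1
    linarith
  have hJeJe : ⟪J e, J e⟫ = 1 := by rw [hJorth, hee]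
  set v : Fin 2 → V := ![e, J e] with hv
  have hOn : Orthonormal ℝ v := by
    rw [orthonormal_iff_ite]
    intro i j
    fin_cases i <;> fin_cases j <;>
      simp [hv, hee, heJe, hJeJe, real_inner_comm (J e) e]
    · simp [hnorm]
    · rw [real_inner_comm]; exact heJe
    · left; nlinarith [norm_nonneg (J e), real_inner_self_eq_norm_sq (J e)]
  have hcard : Fintype.card (Fin 2) = Module.finrank ℝ V := by simp [hdim]
  set b0 : Module.Basis (Fin 2) ℝ V := basisOfOrthonormalOfCardEqFinrank hOn hcard with hb0
  have hb0coe : (b0 : Fin 2 → V) = v := coe_basisOfOrthonormalOfCardEqFinrank hOn hcard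
  have hOn' : Orthonormal ℝ (b0 : Fin 2 → V) := by rw [hb0coe]; exact hOn
  set ob : OrthonormalBasis (Fin 2) ℝ V := b0.toOrthonormalBasis hOn' with hob
  have hobcoe : ∀ i, ob i = v i := by
    intro i
    rw [hob, Module.Basis.coe_toOrthonormalBasis, hb0coe]
  have hob0 : ob 0 = e := hobcoe 0
  have hob1 : ob 1 = J e := hobcoe 1
  -- trace in the orthonormal basis
  have hrepr : ∀ (y : V) (i : Fin 2), ob.toBasis.repr y i = ⟪ob i, y⟫ := by
    intro y i
    rw [ob.coe_toBasis_repr_apply, ob.repr_apply_apply]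
  have htr2 : ⟪e, A e⟫ + ⟪J e, A (J e)⟫ = 2 * H := by
    rw [← htr, LinearMap.trace_eq_matrix_trace ℝ ob.toBasis A, Matrix.trace_fin_two]
    rw [LinearMap.toMatrix_apply, LinearMap.toMatrix_apply, hrepr, hrepr]
    simp only [OrthonormalBasis.coe_toBasis, hob0, hob1]
  set a : ℝ := ⟪e, A e⟫ with ha
  set b : ℝ := ⟪J e, A e⟫ with hb
  -- decomposition of any vector
  have hdecomp : ∀ y : V, y = ⟪e, y⟫ • e + ⟪J e, y⟫ • J e := by
    intro y
    have := ob.sum_repr' y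
    rw [Fin.sum_univ_two, hob0, hob1] at this
    exact this.symm
  have hAe : A e = a • e + b • J e := by
    conv_lhs => rw [hdecomp (A e)]
  have hAJe : A (J e) = b • e + (2 * H - a) • J e := by
    conv_lhs => rw [hdecomp (A (J e))]
    congr 1
    · congr 1
      rw [← hA e (J e), real_inner_comm]
    · congr 1
      linarith
  -- check the identity on the basis
  apply ob.toBasis.ext
  intro i
  fin_cases i <;>
    simp only [Fin.zero_eta, Fin.mk_one, OrthonormalBasis.coe_toBasis, hob0, hob1,
      LinearMap.comp_apply, LinearMap.sub_apply,
      LinearMap.smul_apply, LinearMap.id_apply, LinearMap.neg_apply]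
  · simp only [hJ2', map_sub, map_add, map_smul, map_neg, hAe, hAJe, hJ2']
    module
  · simp only [hJ2', map_sub, map_add, map_smul, map_neg, hAe, hAJe, hJ2']
    module
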